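/- Opial inequality for initial value problems: Let L = D^n + Σ_{j=0}^{n-1} a_j(t) D^j with a_j ∈ C(I), let G(x,t) be the Green's function of L, and y(x) = ∫ₐˣ G(x,t)h(t) dt the unique solution of Ly = h, y^{(j)}(a) = 0 for j = 0,…,n-1. Then for α, β > 0, r > max(1,α), u ≥ 0, v > 0 continuous on I: ∫ₐˣ u(s)|y(s)|^β |h(s)|^α ds ≤ C(x)(∫ₐˣ v(s)|h(s)|^r ds)^{(α+β)/r}, where C(x) is the weighted Opial constant built from Φ(s,t) = |G(s,t)|. -/

import Mathlib

/-!
Hölder's inequality with weight `v` bounds `|y(s)|` by `P(s)^((r-1)/r) H(s)^(1/r)`, where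
`H(s) = ∫ₐˢ v |h|^r`. The integrand `u |y|^β |h|^α` is then at most `f * g` with
`f = u P^(β(r-1)/r) v^(-α/r)` and `g = v^(α/r) |h|^α H^(β/r)`; a second Hölder inequality, with
exponents `r/(r-α)` and `r/α`, finishes the proof, because `g^(r/α) = H' H^(β/α)` integrates
exactly to `α/(α+β) H(x)^((α+β)/α)`.
-/

open intervalIntegral

open MeasureTheory Set

theorem ContinuousOn.memLp_restrict_of_isCompact {X E : Type*} [TopologicalSpace X]
    [T2Space X] [MeasurableSpace X] [OpensMeasurableSpace X] [NormedAddCommGroup E]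
    [SecondCountableTopologyEither X E]
    {μ : Measure X} [IsFiniteMeasureOnCompacts μ] {s : Set X} {f : X → E}
    (hf : ContinuousOn f s) (hs : IsCompact s) (p : ENNReal) : MemLp f p (μ.restrict s) := by
  obtain ⟨C, hC⟩ := hs.exists_bound_of_continuousOn hf
  have : IsFiniteMeasure (μ.restrict s) := isFiniteMeasure_restrict.2 hs.measure_lt_top.ne
  exact .of_bound (hf.aestronglyMeasurable hs.measurableSet) C
    (ae_restrict_of_forall_mem hs.measurableSet hC)

theorem intervalIntegral.integral_mul_le_Lp_mul_Lq_of_nonneg_of_continuousOn {a b p q : ℝ}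
    (hab : a ≤ b) (hpq : p.HolderConjugate q) {f g : ℝ → ℝ}
    (hf : ContinuousOn f (Icc a b)) (hg : ContinuousOn g (Icc a b))
    (hf0 : ∀ s ∈ Icc a b, 0 ≤ f s) (hg0 : ∀ s ∈ Icc a b, 0 ≤ g s) :
    ∫ s in a..b, f s * g s ≤
      (∫ s in a..b, f s ^ p) ^ (1 / p) * (∫ s in a..b, g s ^ q) ^ (1 / q) := by
  simp only [integral_of_le hab, ← integral_Icc_eq_integral_Ioc]
  exact integral_mul_le_Lp_mul_Lq_of_nonneg hpq
    (ae_restrict_of_forall_mem measurableSet_Icc hf0)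
    (ae_restrict_of_forall_mem measurableSet_Icc hg0)
    (hf.memLp_restrict_of_isCompact isCompact_Icc _)
    (hg.memLp_restrict_of_isCompact isCompact_Icc _)

theorem continuousOn_parametric_primitive_Icc {a b : ℝ} (hab : a ≤ b) {f : ℝ → ℝ → ℝ}
    (hf : ContinuousOn (fun p : ℝ × ℝ => f p.1 p.2) (Icc a b ×ˢ Icc a b)) :
    ContinuousOn (fun s => ∫ t in a..s, f s t) (Icc a b) := by
  set π : ℝ → ℝ := fun t => projIcc a b hab t
  have hπ : Continuous π := continuous_subtype_val.comp continuous_projIcc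
  have hπ_id : ∀ t ∈ Icc a b, π t = t := fun t ht =>
    congrArg Subtype.val (projIcc_of_mem hab ht)
  have hext : Continuous fun p : ℝ × ℝ => f (π p.1) (π p.2) :=
    hf.comp_continuous ((hπ.comp continuous_fst).prodMk (hπ.comp continuous_snd))
      fun p => ⟨(projIcc a b hab p.1).2, (projIcc a b hab p.2).2⟩
  refine (continuous_parametric_intervalIntegral_of_continuous (a₀ := a)
    (f := fun s t => f (π s) (π t)) hext
    continuous_id).continuousOn.congr fun s hs => integral_congr fun t ht => ?_
  rw [uIcc_of_le hs.1] at ht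
  simp only [hπ_id s hs, hπ_id t ⟨ht.1, ht.2.trans hs.2⟩]

theorem integral_mul_primitive_rpow {a x p : ℝ} (hax : a ≤ x) (hp : 1 ≤ p) {w : ℝ → ℝ}
    (hw : ContinuousOn w (Icc a x)) :
    ∫ s in a..x, w s * (∫ t in a..s, w t) ^ (p - 1) = (∫ t in a..x, w t) ^ p / p := by
  set H : ℝ → ℝ := fun s => ∫ t in a..s, w t
  have hH : ContinuousOn H (Icc a x) :=
    continuousOn_parametric_primitive_Icc hax (hw.comp continuousOn_snd fun _ hp => hp.2)
  have hH_deriv : ∀ s ∈ Ioo a x, HasDerivAt H (w s) s := fun s hs =>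
    integral_hasDerivAt_right
      ((hw.mono (Icc_subset_Icc_right hs.2.le)).intervalIntegrable_of_Icc hs.1.le)
      ((hw.mono Ioo_subset_Icc_self).stronglyMeasurableAtFilter isOpen_Ioo s hs)
      (hw.continuousAt (Icc_mem_nhds hs.1 hs.2))
  have hp0 : p ≠ 0 := by positivity
  rw [integral_eq_sub_of_hasDerivAt_of_le hax (f := fun s => H s ^ p / p)
    (f' := fun s => w s * H s ^ (p - 1))
    ((hH.rpow_const fun _ _ => Or.inr (by positivity)).div_const p)
    (fun s hs => ?_)
    ((hw.mul (hH.rpow_const fun _ _ => Or.inr (by linarith))).intervalIntegrable_of_Icc hax)]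
  · simp [H, Real.zero_rpow hp0]
  · refine (((Real.hasDerivAt_rpow_const (Or.inr hp)).comp s (hH_deriv s hs)).div_const
      p).congr_deriv ?_
    field_simp

theorem abs_integral_mul_le_weighted_holder {a s r : ℝ} (has : a ≤ s) (hr : 1 < r) {K h v : ℝ → ℝ}
    (hK : ContinuousOn K (Icc a s)) (hh : ContinuousOn h (Icc a s))
    (hv : ContinuousOn v (Icc a s)) (hv0 : ∀ t ∈ Icc a s, 0 < v t) :
    |∫ t in a..s, K t * h t| ≤
      (∫ t in a..s, v t ^ (-(1 / (r - 1))) * |K t| ^ (r / (r - 1))) ^ ((r - 1) / r) *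
        (∫ t in a..s, v t * |h t| ^ r) ^ (1 / r) := by
  have hr0 : 0 < r := by linarith
  have hconj : (r / (r - 1)).HolderConjugate r :=
    (Real.HolderConjugate.conjExponent hr).symm
  have hv_rpow (c : ℝ) : ContinuousOn (fun t => v t ^ c) (Icc a s) :=
    hv.rpow_const fun t ht => Or.inl (hv0 t ht).ne'
  calc |∫ t in a..s, K t * h t| ≤ ∫ t in a..s, |K t * h t| :=
        abs_integral_le_integral_abs has
    _ = ∫ t in a..s, (v t ^ (-(1 / r)) * |K t|) * (v t ^ (1 / r) * |h t|) := by
        refine integral_congr fun t ht => ?_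
        rw [uIcc_of_le has] at ht
        have hvt : v t ^ (-(1 / r)) * v t ^ (1 / r) = 1 := by
          rw [← Real.rpow_add (hv0 t ht), neg_add_cancel, Real.rpow_zero]
        rw [abs_mul, mul_mul_mul_comm, hvt, one_mul]
    _ ≤ (∫ t in a..s, (v t ^ (-(1 / r)) * |K t|) ^ (r / (r - 1))) ^ (1 / (r / (r - 1))) *
          (∫ t in a..s, (v t ^ (1 / r) * |h t|) ^ r) ^ (1 / r) :=
        integral_mul_le_Lp_mul_Lq_of_nonneg_of_continuousOn has hconj
          ((hv_rpow _).mul hK.abs) ((hv_rpow _).mul hh.abs)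
          (fun t ht => mul_nonneg (Real.rpow_nonneg (hv0 t ht).le _) (abs_nonneg _))
          (fun t ht => mul_nonneg (Real.rpow_nonneg (hv0 t ht).le _) (abs_nonneg _))
    _ = _ := by
        rw [one_div_div]
        congr 2 <;> refine integral_congr fun t ht => ?_ <;> rw [uIcc_of_le has] at ht <;>
          simp only [Real.mul_rpow (Real.rpow_nonneg (hv0 t ht).le _) (abs_nonneg _),
            ← Real.rpow_mul (hv0 t ht).le]
        · congr 2
          field_simp
        · rw [one_div_mul_cancel hr0.ne', Real.rpow_one]

theorem opial_integrand_le {α β r y h u v P H : ℝ} (hβ : 0 ≤ β) (hu : 0 ≤ u) (hv : 0 < v)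
    (hP : 0 ≤ P) (hH : 0 ≤ H) (hy : |y| ≤ P ^ ((r - 1) / r) * H ^ (1 / r)) :
    u * |y| ^ β * |h| ^ α ≤
      (u * P ^ ((r - 1) / r * β) * v ^ (-(α / r))) *
        (v ^ (α / r) * |h| ^ α * H ^ (1 / r * β)) := by
  have hyβ : |y| ^ β ≤ P ^ ((r - 1) / r * β) * H ^ (1 / r * β) := by
    rw [Real.rpow_mul hP, Real.rpow_mul hH,
      ← Real.mul_rpow (Real.rpow_nonneg hP _) (Real.rpow_nonneg hH _)]
    exact Real.rpow_le_rpow (abs_nonneg _) hy hβ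
  have hvv : v ^ (-(α / r)) * v ^ (α / r) = 1 := by
    rw [← Real.rpow_add hv, neg_add_cancel, Real.rpow_zero]
  calc u * |y| ^ β * |h| ^ α ≤ u * (P ^ ((r - 1) / r * β) * H ^ (1 / r * β)) * |h| ^ α := by
        gcongr
    _ = _ := by
        linear_combination (u * P ^ ((r - 1) / r * β) * H ^ (1 / r * β) * |h| ^ α) * hvv.symm

theorem opial_left_factor_rpow {α β r u v P : ℝ} (hr : r ≠ 0) (hαr : r ≠ α) (hu : 0 ≤ u)
    (hv : 0 ≤ v) (hP : 0 ≤ P) :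
    (u * P ^ ((r - 1) / r * β) * v ^ (-(α / r))) ^ (r / (r - α)) =
      (u ^ r * v ^ (-α)) ^ (1 / (r - α)) * P ^ (β * (r - 1) / (r - α)) := by
  have hrα : r - α ≠ 0 := sub_ne_zero.2 hαr
  rw [Real.mul_rpow (by positivity) (by positivity), Real.mul_rpow hu (by positivity),
    Real.mul_rpow (by positivity) (by positivity), ← Real.rpow_mul hP, ← Real.rpow_mul hv,
    ← Real.rpow_mul hu, ← Real.rpow_mul hv]
  rw [show (r - 1) / r * β * (r / (r - α)) = β * (r - 1) / (r - α) by field_simp,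
    show -(α / r) * (r / (r - α)) = -α * (1 / (r - α)) by field_simp,
    show r * (1 / (r - α)) = r / (r - α) by field_simp]
  ring

theorem opial_right_factor_rpow {α β r v h H : ℝ} (hα : α ≠ 0) (hr : r ≠ 0) (hv : 0 ≤ v)
    (hH : 0 ≤ H) :
    (v ^ (α / r) * |h| ^ α * H ^ (1 / r * β)) ^ (r / α) =
      v * |h| ^ r * H ^ ((α + β) / α - 1) := by
  rw [Real.mul_rpow (by positivity) (by positivity), Real.mul_rpow (by positivity) (by positivity),
    ← Real.rpow_mul hv, ← Real.rpow_mul (abs_nonneg _), ← Real.rpow_mul hH]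
  rw [show α / r * (r / α) = 1 by field_simp, show α * (r / α) = r by field_simp,
    show 1 / r * β * (r / α) = (α + β) / α - 1 by field_simp; ring, Real.rpow_one]

theorem integral_opial_of_abs_le {a x α β r : ℝ} (hax : a ≤ x) (hα : 0 < α) (hβ : 0 ≤ β)
    (hr : 1 ≤ r) (hαr : α < r) {y h u v P : ℝ → ℝ} (hy : ContinuousOn y (Icc a x))
    (hh : ContinuousOn h (Icc a x)) (hu : ContinuousOn u (Icc a x))
    (hv : ContinuousOn v (Icc a x)) (hP : ContinuousOn P (Icc a x))
    (hu0 : ∀ s ∈ Icc a x, 0 ≤ u s) (hv0 : ∀ s ∈ Icc a x, 0 < v s)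
    (hP0 : ∀ s ∈ Icc a x, 0 ≤ P s)
    (hyP : ∀ s ∈ Icc a x,
      |y s| ≤ P s ^ ((r - 1) / r) * (∫ t in a..s, v t * |h t| ^ r) ^ (1 / r)) :
    ∫ s in a..x, u s * |y s| ^ β * |h s| ^ α ≤
      ((α / (α + β)) ^ (α / r) *
        (∫ s in a..x, (u s ^ r * v s ^ (-α)) ^ (1 / (r - α)) *
            P s ^ (β * (r - 1) / (r - α))) ^ ((r - α) / r)) *
      (∫ s in a..x, v s * |h s| ^ r) ^ ((α + β) / r) := by
  have hr0 : 0 < r := hα.trans hαr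
  have hrα : 0 < r - α := sub_pos.2 hαr
  set H : ℝ → ℝ := fun s => ∫ t in a..s, v t * |h t| ^ r
  have hw : ContinuousOn (fun s => v s * |h s| ^ r) (Icc a x) :=
    hv.mul (hh.abs.rpow_const fun _ _ => Or.inr hr0.le)
  have hH : ContinuousOn H (Icc a x) :=
    continuousOn_parametric_primitive_Icc hax (hw.comp continuousOn_snd fun _ hp => hp.2)
  have hH0 : ∀ s ∈ Icc a x, 0 ≤ H s := fun s hs => integral_nonneg hs.1 fun t ht =>
    mul_nonneg (hv0 t ⟨ht.1, ht.2.trans hs.2⟩).le (Real.rpow_nonneg (abs_nonneg _) _)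
  have hv_rpow (c : ℝ) : ContinuousOn (fun t => v t ^ c) (Icc a x) :=
    hv.rpow_const fun t ht => Or.inl (hv0 t ht).ne'
  set f : ℝ → ℝ := fun s => u s * P s ^ ((r - 1) / r * β) * v s ^ (-(α / r))
  set g : ℝ → ℝ := fun s => v s ^ (α / r) * |h s| ^ α * H s ^ (1 / r * β)
  have hf : ContinuousOn f (Icc a x) :=
    (hu.mul (hP.rpow_const fun _ _ => Or.inr (by have := sub_nonneg.2 hr; positivity))).mul
      (hv_rpow _)
  have hg : ContinuousOn g (Icc a x) :=
    ((hv_rpow _).mul (hh.abs.rpow_const fun _ _ => Or.inr hα.le)).mul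
      (hH.rpow_const fun _ _ => Or.inr (by positivity))
  have hf0 : ∀ s ∈ Icc a x, 0 ≤ f s := fun s hs => by
    have := hu0 s hs; have := hv0 s hs; have := hP0 s hs; positivity
  have hg0 : ∀ s ∈ Icc a x, 0 ≤ g s := fun s hs => by
    have := hv0 s hs; have := hH0 s hs; positivity
  have hconj : (r / (r - α)).HolderConjugate (r / α) := by
    simpa only [one_div_div] using Real.holderConjugate_one_div (div_pos hrα hr0)
      (div_pos hα hr0) (by field_simp; ring)
  have hp : 1 ≤ (α + β) / α := by rw [le_div_iff₀ hα]; linarith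
  have hHx : 0 ≤ H x := hH0 x ⟨hax, le_rfl⟩
  calc ∫ s in a..x, u s * |y s| ^ β * |h s| ^ α
      ≤ ∫ s in a..x, f s * g s :=
        integral_mono_on hax (((hu.mul (hy.abs.rpow_const fun _ _ => Or.inr hβ)).mul
            (hh.abs.rpow_const fun _ _ => Or.inr hα.le)).intervalIntegrable_of_Icc hax)
          ((hf.mul hg).intervalIntegrable_of_Icc hax) fun s hs =>
          opial_integrand_le hβ (hu0 s hs) (hv0 s hs) (hP0 s hs) (hH0 s hs) (hyP s hs)
    _ ≤ (∫ s in a..x, f s ^ (r / (r - α))) ^ (1 / (r / (r - α))) *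
          (∫ s in a..x, g s ^ (r / α)) ^ (1 / (r / α)) :=
        integral_mul_le_Lp_mul_Lq_of_nonneg_of_continuousOn hax hconj hf hg hf0 hg0
    _ = (∫ s in a..x, (u s ^ r * v s ^ (-α)) ^ (1 / (r - α)) *
            P s ^ (β * (r - 1) / (r - α))) ^ ((r - α) / r) *
          (α / (α + β) * H x ^ ((α + β) / α)) ^ (α / r) := by
        have hmem : uIcc a x ⊆ Icc a x := (uIcc_of_le hax).subset
        rw [integral_congr fun s hs => opial_left_factor_rpow hr0.ne' hαr.ne'
            (hu0 s (hmem hs)) (hv0 s (hmem hs)).le (hP0 s (hmem hs)),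
          integral_congr fun s hs => opial_right_factor_rpow hα.ne' hr0.ne'
            (hv0 s (hmem hs)).le (hH0 s (hmem hs)),
          integral_mul_primitive_rpow hax hp hw, one_div_div, one_div_div]
        congr 2
        rw [div_eq_inv_mul, inv_div]
    _ = _ := by
        rw [Real.mul_rpow (by positivity) (by positivity), ← Real.rpow_mul hHx,
          show (α + β) / α * (α / r) = (α + β) / r by field_simp]
        ring

theorem opial_green_function_general (a b : ℝ)
    (G : ℝ → ℝ → ℝ)
    (hGc : ContinuousOn (fun p : ℝ × ℝ => G p.1 p.2) (Set.Icc a b ×ˢ Set.Icc a b))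
    (h y u v : ℝ → ℝ)
    (hh : ContinuousOn h (Set.Icc a b))
    (hrep : ∀ x ∈ Set.Icc a b, y x = ∫ t in a..x, G x t * h t)
    (hu : ContinuousOn u (Set.Icc a b)) (hv : ContinuousOn v (Set.Icc a b))
    (hu0 : ∀ s ∈ Set.Icc a b, 0 ≤ u s) (hv0 : ∀ s ∈ Set.Icc a b, 0 < v s)
    (α β r : ℝ) (hα : 0 < α) (hβ : 0 < β) (hr : max 1 α < r)
    (x : ℝ) (hx : x ∈ Set.Icc a b) :
    ∫ s in a..x, u s * |y s| ^ β * |h s| ^ α ≤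
      ((α / (α + β)) ^ (α / r) *
        (∫ s in a..x, (u s ^ r * v s ^ (-α)) ^ (1 / (r - α)) *
            (∫ t in a..s, v t ^ (-(1 / (r - 1))) * |G s t| ^ (r / (r - 1)))
              ^ (β * (r - 1) / (r - α))) ^ ((r - α) / r)) *
      (∫ s in a..x, v s * |h s| ^ r) ^ ((α + β) / r) := by
  obtain ⟨hr1, hαr⟩ := max_lt_iff.1 hr
  have hsub : Icc a x ⊆ Icc a b := Icc_subset_Icc_right hx.2
  have hGx := hGc.mono (prod_mono hsub hsub)
  have hvx := hv.mono hsub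
  have hv0x : ∀ s ∈ Icc a x, 0 < v s := fun s hs => hv0 s (hsub hs)
  have hy : ContinuousOn y (Icc a x) :=
    (continuousOn_parametric_primitive_Icc hx.1 (hGx.mul (hh.mono hsub |>.comp continuousOn_snd
      fun _ hp => hp.2))).congr fun s hs => hrep s (hsub hs)
  have hP := continuousOn_parametric_primitive_Icc hx.1
    (f := fun s t => v t ^ (-(1 / (r - 1))) * |G s t| ^ (r / (r - 1)))
    (((hvx.comp continuousOn_snd fun _ hp => hp.2).rpow_const
        fun _ hp => Or.inl (hv0x _ hp.2).ne').mul
      (hGx.abs.rpow_const fun _ _ => Or.inr (div_pos (by linarith) (by linarith)).le))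
  have hP0 : ∀ s ∈ Icc a x,
      0 ≤ ∫ t in a..s, v t ^ (-(1 / (r - 1))) * |G s t| ^ (r / (r - 1)) :=
    fun s hs => integral_nonneg hs.1 fun t ht => mul_nonneg
      (Real.rpow_nonneg (hv0x t ⟨ht.1, ht.2.trans hs.2⟩).le _) (Real.rpow_nonneg (abs_nonneg _) _)
  refine integral_opial_of_abs_le hx.1 hα hβ.le hr1.le hαr hy (hh.mono hsub) (hu.mono hsub)
    hvx hP (fun s hs => hu0 s (hsub hs)) hv0x hP0 fun s hs => ?_
  have hst : Icc a s ⊆ Icc a x := Icc_subset_Icc_right hs.2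
  rw [hrep s (hsub hs)]
  exact abs_integral_mul_le_weighted_holder hs.1 hr1
    (hGx.comp (Continuous.prodMk_right s).continuousOn fun t ht => ⟨hs, hst ht⟩)
    (hh.mono (hsub.trans' hst)) (hvx.mono hst) fun t ht => hv0x t (hst ht)

/-- Opial inequality for initial value problems: if `y(x) = ∫ₐˣ G(x,t) h(t) dt` is the
solution of `Ly = h`, `y⁽ʲ⁾(a) = 0`, given by the Green's function `G` of the linear
differential operator `L`, then the weighted Opial inequality holds with `Φ = |G|`. -/
theorem opial_green_function (a b : ℝ) (hab : a ≤ b)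
    (G : ℝ → ℝ → ℝ)
    (hGc : ContinuousOn (fun p : ℝ × ℝ => G p.1 p.2) (Set.Icc a b ×ˢ Set.Icc a b))
    (h y u v : ℝ → ℝ)
    (hh : ContinuousOn h (Set.Icc a b))
    (hrep : ∀ x ∈ Set.Icc a b, y x = ∫ t in a..x, G x t * h t)
    (hu : ContinuousOn u (Set.Icc a b)) (hv : ContinuousOn v (Set.Icc a b))
    (hu0 : ∀ s ∈ Set.Icc a b, 0 ≤ u s) (hv0 : ∀ s ∈ Set.Icc a b, 0 < v s)
    (α β r : ℝ) (hα : 0 < α) (hβ : 0 < β) (hr : max 1 α < r)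
    (x : ℝ) (hx : x ∈ Set.Icc a b) :
    ∫ s in a..x, u s * |y s| ^ β * |h s| ^ α ≤
      ((α / (α + β)) ^ (α / r) *
        (∫ s in a..x, (u s ^ r * v s ^ (-α)) ^ (1 / (r - α)) *
            (∫ t in a..s, v t ^ (-(1 / (r - 1))) * |G s t| ^ (r / (r - 1)))
              ^ (β * (r - 1) / (r - α))) ^ ((r - α) / r)) *
      (∫ s in a..x, v s * |h s| ^ r) ^ ((α + β) / r) :=
  opial_green_function_general a b G hGc h y u v hh hrep hu hv hu0 hv0 α β r hα hβ hr x hx
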